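/- If F : ℝ^n ⇒ ℝ^n is SCD regular around (x, y) ∈ gph F, then scd reg F(x, y) < ∞. -/

import Mathlib

open Filter Topology Metric Set
open scoped InnerProductSpace RealInnerProductSpace ENNReal NNReal

noncomputable section

namespace SCD

abbrev E (n : ℕ) := EuclideanSpace ℝ (Fin n)
abbrev E2 (n : ℕ) := WithLp 2 (E n × E n)

variable {n : ℕ}

def lp2 (n : ℕ) : E2 n ≃ₗ[ℝ] E n × E n := WithLp.linearEquiv 2 ℝ (E n × E n)
def mk2 (u v : E n) : E2 n := (lp2 n).symm (u, v)
def fst2 (z : E2 n) : E n := (lp2 n z).1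
def snd2 (z : E2 n) : E n := (lp2 n z).2

instance : FiniteDimensional ℝ (E2 n) := Module.Finite.equiv (lp2 n).symm

def tcone {H : Type*} [NormedAddCommGroup H] [NormedSpace ℝ H] (A : Set H) (z : H) : Set H :=
  {w | ∃ t : ℕ → ℝ, ∃ wk : ℕ → H, (∀ k, 0 < t k) ∧ Tendsto t atTop (𝓝 0) ∧
      Tendsto wk atTop (𝓝 w) ∧ ∀ k, z + t k • wk k ∈ A}

def gph (F : E n → Set (E n)) : Set (E2 n) := {z | snd2 z ∈ F (fst2 z)}
def projC (L : Submodule ℝ (E2 n)) : E2 n →L[ℝ] E2 n := L.subtypeL.comp L.orthogonalProjectionOnto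
def dZ (L₁ L₂ : Submodule ℝ (E2 n)) : ℝ := ‖projC L₁ - projC L₂‖

def Sneg (n : ℕ) : E2 n ≃ₗ[ℝ] E2 n :=
  (lp2 n).trans (((LinearEquiv.prodComm ℝ (E n) (E n)).trans
    ((LinearEquiv.neg ℝ).prodCongr (LinearEquiv.refl ℝ (E n)))).trans (lp2 n).symm)

def adjS (L : Submodule ℝ (E2 n)) : Submodule ℝ (E2 n) := Lᗮ.map (Sneg n).toLinearMap

/-- `O_F`: the set of points of `gph F` where `F` is graphically smooth of dimension `n`,
i.e. the tangent cone to the graph is an `n`-dimensional linear subspace. -/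
def OF (F : E n → Set (E n)) : Set (E2 n) :=
  {z | z ∈ gph F ∧ ∃ L : Submodule ℝ (E2 n),
    Module.finrank ℝ L = n ∧ (L : Set (E2 n)) = tcone (gph F) z}

/-- The primal generalized derivative `Sp F(x,y)`. -/
def Sp (F : E n → Set (E n)) (z : E2 n) : Set (Submodule ℝ (E2 n)) :=
  {L | Module.finrank ℝ L = n ∧ ∃ (zk : ℕ → E2 n) (Lk : ℕ → Submodule ℝ (E2 n)),
      (∀ k, zk k ∈ gph F ∧ Module.finrank ℝ (Lk k) = n ∧
        ((Lk k : Set (E2 n)) = tcone (gph F) (zk k))) ∧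
      Tendsto zk atTop (𝓝 z) ∧ Tendsto (fun k => dZ (Lk k) L) atTop (𝓝 0)}

/-- The dual generalized derivative `Sp* F(x,y)`. -/
def SpStar (F : E n → Set (E n)) (z : E2 n) : Set (Submodule ℝ (E2 n)) :=
  {L' | ∃ L ∈ Sp F z, L' = adjS L}

/-- `F` has the SCD property at `z ∈ gph F`. -/
def SCDAt (F : E n → Set (E n)) (z : E2 n) : Prop := (Sp F z).Nonempty

/-- `F` has the SCD property around `z ∈ gph F`. -/
def SCDAround (F : E n → Set (E n)) (z : E2 n) : Prop :=
  ∃ δ > (0 : ℝ), ∀ z' ∈ gph F, dist z' z < δ → SCDAt F z'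

/-- `Z_n^{reg}`: the subspaces `L ∈ Z_n` such that `(y*, 0) ∈ L` implies `y* = 0`. -/
def Znreg (n : ℕ) : Set (Submodule ℝ (E2 n)) :=
  {L | Module.finrank ℝ L = n ∧ ∀ y : E n, mk2 y 0 ∈ L → y = 0}

/-- `F` is SCD regular around `z ∈ gph F`. -/
def SCDRegularAround (F : E n → Set (E n)) (z : E2 n) : Prop :=
  SCDAround F z ∧ ∀ L ∈ SpStar F z, L ∈ Znreg n

/-- The set of values `‖y*‖` for `(y*, x*)` in some `L ∈ Sp* F(x,y)` with `‖x*‖ ≤ 1`;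
its supremum is the modulus of SCD regularity. -/
def scdregSet (F : E n → Set (E n)) (z : E2 n) : Set ℝ :=
  {r | ∃ L ∈ SpStar F z, ∃ w : E2 n, w ∈ L ∧ ‖snd2 w‖ ≤ 1 ∧ r = ‖fst2 w‖}

/-- The modulus of SCD regularity `scd reg F(x,y)`. -/
def scdreg (F : E n → Set (E n)) (z : E2 n) : ℝ := sSup (scdregSet F z)

/-- The graph of the outer limiting graphical derivative `D^♯F(x̄,ȳ)`. -/
def DsharpG (F : E n → Set (E n)) (z : E2 n) : Set (E2 n) :=
  {w | ∃ (zk : ℕ → E2 n) (wk : ℕ → E2 n),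
    (∀ k, zk k ∈ gph F ∧ wk k ∈ tcone (gph F) (zk k)) ∧
    Tendsto zk atTop (𝓝 z) ∧ Tendsto wk atTop (𝓝 w)}

/-- The regular (Fréchet) normal cone: the polar of the tangent cone. -/
def regN (A : Set (E2 n)) (z : E2 n) : Set (E2 n) := {w | ∀ v ∈ tcone A z, ⟪w, v⟫_ℝ ≤ 0}

/-- The limiting (Mordukhovich) normal cone. -/
def limN (A : Set (E2 n)) (z : E2 n) : Set (E2 n) :=
  {w | ∃ (zk wk : ℕ → E2 n), (∀ k, zk k ∈ A ∧ wk k ∈ regN A (zk k)) ∧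
    Tendsto zk atTop (𝓝 z) ∧ Tendsto wk atTop (𝓝 w)}

/-- The graph of the limiting coderivative: `(y*, x*)` with `(x*, -y*)` in the limiting
normal cone to the graph. -/
def coderivG (F : E n → Set (E n)) (z : E2 n) : Set (E2 n) :=
  {w | mk2 (snd2 w) (-(fst2 w)) ∈ limN (gph F) z}

/-- The graph of the strict (paratingent) derivative `D_*F(x̄,ȳ)`. -/
def paraconeG (F : E n → Set (E n)) (z : E2 n) : Set (E2 n) :=
  {w | ∃ (t : ℕ → ℝ) (z1 z2 : ℕ → E2 n), (∀ k, 0 < t k) ∧ Tendsto t atTop (𝓝 0) ∧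
    (∀ k, z1 k ∈ gph F ∧ z2 k ∈ gph F) ∧ Tendsto z1 atTop (𝓝 z) ∧ Tendsto z2 atTop (𝓝 z) ∧
    Tendsto (fun k => (t k)⁻¹ • (z2 k - z1 k)) atTop (𝓝 w)}

/-- The B-subdifferential of `f : U → ℝ^n` at `x`. -/
def Bsub (f : E n → E n) (U : Set (E n)) (x : E n) : Set (E n →L[ℝ] E n) :=
  {A | ∃ xk : ℕ → E n, (∀ k, xk k ∈ U ∧ DifferentiableAt ℝ f (xk k)) ∧
    Tendsto xk atTop (𝓝 x) ∧ Tendsto (fun k => fderiv ℝ f (xk k)) atTop (𝓝 A)}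

/-- A single-valued map `f` on `U` viewed as a set-valued map. -/
def sv (f : E n → E n) (U : Set (E n)) : E n → Set (E n) := fun x => {y | x ∈ U ∧ y = f x}

/-- The linear map `u ↦ (u, A u)`. -/
def graphMap (A : E n →L[ℝ] E n) : E n →ₗ[ℝ] E2 n :=
  (lp2 n).symm.toLinearMap.comp (LinearMap.prod LinearMap.id A.toLinearMap)

/-- The subspace `rge(I, A) = {(u, Au) : u ∈ ℝ^n}`. -/
def rgeIA (A : E n →L[ℝ] E n) : Submodule ℝ (E2 n) := LinearMap.range (graphMap A)

/-- The linear map `p ↦ (C p, p)`. -/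
def graphMapRev (C : E n →L[ℝ] E n) : E n →ₗ[ℝ] E2 n :=
  (lp2 n).symm.toLinearMap.comp (LinearMap.prod C.toLinearMap LinearMap.id)

/-- The subspace `rge(C, I) = {(C p, p) : p ∈ ℝ^n}`. -/
def rgeCI (C : E n →L[ℝ] E n) : Submodule ℝ (E2 n) := LinearMap.range (graphMapRev C)

/-- The preimage map `F^{-1}(y)`. -/
def Finv (F : E n → Set (E n)) (y : E n) : Set (E n) := {x | y ∈ F x}

/-- Metric subregularity at `z ∈ gph F` with constant `κ`. -/
def SubregWith (F : E n → Set (E n)) (z : E2 n) (κ : ℝ) : Prop :=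
  ∃ δ > (0 : ℝ), ∀ x' : E n, dist x' (fst2 z) < δ →
    EMetric.infEdist x' (Finv F (snd2 z)) ≤ ENNReal.ofReal κ * EMetric.infEdist (snd2 z) (F x')

/-- `F` is metrically subregular at `z ∈ gph F`. -/
def SubregAt (F : E n → Set (E n)) (z : E2 n) : Prop := ∃ κ, 0 ≤ κ ∧ SubregWith F z κ

/-- The modulus of metric subregularity `subreg F(x,y)`. -/
def subregMod (F : E n → Set (E n)) (z : E2 n) : ℝ := sInf {κ | 0 ≤ κ ∧ SubregWith F z κ}

/-- `F` is strongly metrically subregular at `z ∈ gph F`. -/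
def StrSubregAt (F : E n → Set (E n)) (z : E2 n) : Prop :=
  SubregAt F z ∧ ∃ δ > (0 : ℝ), ∀ x' ∈ Finv F (snd2 z), dist x' (fst2 z) < δ → x' = fst2 z

/-- `F` is strongly metrically subregular around `zb ∈ gph F` (with finite `lsubreg`). -/
def StrSubregAround (F : E n → Set (E n)) (zb : E2 n) : Prop :=
  ∃ δ > (0 : ℝ), (∀ z ∈ gph F, dist z zb < δ → StrSubregAt F z) ∧
    ∃ c : ℝ, ∀ z ∈ gph F, dist z zb < δ → subregMod F z ≤ c

/-- `lsubreg F(x̄,ȳ)`: the limsup of `subreg F(x,y)` over graph points `(x,y) → (x̄,ȳ)`. -/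
def lsubreg (F : E n → Set (E n)) (zb : E2 n) : ℝ :=
  Filter.limsup (fun z => subregMod F z) (𝓝[gph F] zb)

/-- Metric regularity around `zb ∈ gph F` with constant `κ`. -/
def RegWith (F : E n → Set (E n)) (zb : E2 n) (κ : ℝ) : Prop :=
  ∃ δ > (0 : ℝ), ∀ x y : E n, dist x (fst2 zb) < δ → dist y (snd2 zb) < δ →
    EMetric.infEdist x (Finv F y) ≤ ENNReal.ofReal κ * EMetric.infEdist y (F x)

/-- `F` is metrically regular around `zb ∈ gph F`. -/
def MetrRegAround (F : E n → Set (E n)) (zb : E2 n) : Prop := ∃ κ, 0 ≤ κ ∧ RegWith F zb κ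

/-- The modulus of metric regularity `reg F(x̄,ȳ)`. -/
def regMod (F : E n → Set (E n)) (zb : E2 n) : ℝ := sInf {κ | 0 ≤ κ ∧ RegWith F zb κ}

/-- `F` is strongly metrically regular around `zb ∈ gph F`: metrically regular and `F⁻¹`
has a single-valued localization around `(ȳ, x̄)`. -/
def StrRegAround (F : E n → Set (E n)) (zb : E2 n) : Prop :=
  MetrRegAround F zb ∧
  ∃ (X' Y' : Set (E n)) (h : E n → E n), IsOpen X' ∧ IsOpen Y' ∧
    fst2 zb ∈ X' ∧ snd2 zb ∈ Y' ∧ h (snd2 zb) = fst2 zb ∧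
    gph F ∩ {w | fst2 w ∈ X' ∧ snd2 w ∈ Y'} = {w | snd2 w ∈ Y' ∧ fst2 w = h (snd2 w)}

/-- `F` is SCD semismooth* at `zb ∈ gph F`. -/
def SCDSemismoothAt (F : E n → Set (E n)) (zb : E2 n) : Prop :=
  SCDAround F zb ∧ ∀ ε > (0 : ℝ), ∃ δ > (0 : ℝ), ∀ z ∈ gph F, dist z zb ≤ δ →
    ∀ L ∈ SpStar F z, ∀ w : E2 n, w ∈ L →
      |⟪snd2 w, fst2 z - fst2 zb⟫_ℝ - ⟪fst2 w, snd2 z - snd2 zb⟫_ℝ| ≤ ε * ‖z - zb‖ * ‖w‖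

/-- `F` is graphically Lipschitzian of dimension `n` at `zb` with transformation mapping `Φ`,
local inverse `Ψ`, neighborhood `W`, and `K`-Lipschitz map `f : U → ℝ^n`. -/
def GraphLipWith (F : E n → Set (E n)) (zb : E2 n) (Φ Ψ : E2 n → E2 n)
    (W : Set (E2 n)) (U : Set (E n)) (f : E n → E n) (K : ℝ≥0) : Prop :=
  IsOpen W ∧ zb ∈ W ∧ ContDiffOn ℝ 1 Φ W ∧ Set.InjOn Φ W ∧ IsOpen (Φ '' W) ∧
  ContDiffOn ℝ 1 Ψ (Φ '' W) ∧ Set.LeftInvOn Ψ Φ W ∧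
  IsOpen U ∧ LipschitzOnWith K f U ∧
  Φ '' (gph F ∩ W) = {w | fst2 w ∈ U ∧ snd2 w = f (fst2 w)}

/-- `F` is graphically Lipschitzian of dimension `n` at `zb` with transformation mapping `Φ`. -/
def GraphLipAt (F : E n → Set (E n)) (zb : E2 n) (Φ : E2 n → E2 n) : Prop :=
  ∃ Ψ W U f K, GraphLipWith F zb Φ Ψ W U f K

/-- `∇̄^Φ F(x̄,ȳ)`: the `(2n)×n` matrices `Z` (as linear maps `ℝ^n → ℝ^{2n}`) with
`rge Z ∈ Sp F(x̄,ȳ)` and upper block of `∇Φ(x̄,ȳ)Z` equal to the identity. -/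
def BsubPhi (F : E n → Set (E n)) (zb : E2 n) (Φ : E2 n → E2 n) : Set (E n →L[ℝ] E2 n) :=
  {Z | LinearMap.range (Z : E n →ₗ[ℝ] E2 n) ∈ Sp F zb ∧ ∀ p, fst2 (fderiv ℝ Φ zb (Z p)) = p}

/-- A (globally) monotone set-valued map. -/
def MonoMap (T : E n → Set (E n)) : Prop :=
  ∀ x₁ y₁ x₂ y₂, y₁ ∈ T x₁ → y₂ ∈ T x₂ → 0 ≤ ⟪y₁ - y₂, x₁ - x₂⟫_ℝ

/-- `F` is locally maximally monotone at `z ∈ gph F`. -/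
def LocMaxMonoAt (F : E n → Set (E n)) (z : E2 n) : Prop :=
  ∃ X Y : Set (E n), IsOpen X ∧ IsOpen Y ∧ fst2 z ∈ X ∧ snd2 z ∈ Y ∧
    (∀ w₁ ∈ gph F ∩ {w | fst2 w ∈ X ∧ snd2 w ∈ Y},
     ∀ w₂ ∈ gph F ∩ {w | fst2 w ∈ X ∧ snd2 w ∈ Y},
       0 ≤ ⟪snd2 w₁ - snd2 w₂, fst2 w₁ - fst2 w₂⟫_ℝ) ∧
    ∀ T : E n → Set (E n), MonoMap T →
      gph F ∩ {w | fst2 w ∈ X ∧ snd2 w ∈ Y} ⊆ gph T →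
      gph F ∩ {w | fst2 w ∈ X ∧ snd2 w ∈ Y} = gph T ∩ {w | fst2 w ∈ X ∧ snd2 w ∈ Y}

/-- `F` is locally maximally hypomonotone at `z ∈ gph F`:
`γI + F` is locally maximally monotone at `(x, γx + y)` for some `γ ≥ 0`. -/
def LocMaxHypoAt (F : E n → Set (E n)) (z : E2 n) : Prop :=
  ∃ γ : ℝ, 0 ≤ γ ∧ LocMaxMonoAt (fun x => (fun y => γ • x + y) '' F x)
    (mk2 (fst2 z) (γ • fst2 z + snd2 z))

/-- A firmly nonexpansive matrix: `⟨Bv, v⟩ ≥ ‖Bv‖²` for all `v`. -/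
def FirmNonexp (B : E n →L[ℝ] E n) : Prop := ∀ v, ‖B v‖ ^ 2 ≤ ⟪B v, v⟫_ℝ

/-!
If the moduli were unbounded, normalizing elements `(y*, x*)` of subspaces in `Sp* F(x,y)` with
`‖x*‖ ≤ 1` and `‖y*‖ → ∞` would give unit vectors whose second component tends to `0`. The set of
orthogonal projections onto `n`-planes is compact and `Sp F(x,y)` is closed in it (it is cut out by
a closure condition), so along a subsequence the subspaces converge to some `L ∈ Sp F(x,y)` and the
unit vectors to a unit vector `(y*, 0) ∈ L*`, which is impossible for `L* ∈ Z_n^{reg}`.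
-/

end SCD

section Grassmannian

variable {V : Type*} [NormedAddCommGroup V] [InnerProductSpace ℝ V] [FiniteDimensional ℝ V]

lemma isClosed_setOf_isStarProjection : IsClosed {p : V →L[ℝ] V | IsStarProjection p} := by
  simp only [isStarProjection_iff, IsIdempotentElem, IsSelfAdjoint, Set.ofPred_and]
  exact (isClosed_eq (continuous_id.mul continuous_id) continuous_id).inter
    (isClosed_eq continuous_star continuous_id)

lemma Submodule.trace_starProjection (K : Submodule ℝ V) :
    LinearMap.trace ℝ V K.starProjection = Module.finrank ℝ K :=
  LinearMap.IsProj.trace ⟨K.starProjection_apply_mem, fun _ => K.starProjection_eq_self_iff.2⟩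

/-- Compactness of the Grassmannian of `m`-planes, in the topology of orthogonal projections. -/
lemma exists_subseq_tendsto_starProjection {m : ℕ} {L : ℕ → Submodule ℝ V}
    (hL : ∀ k, Module.finrank ℝ (L k) = m) :
    ∃ M : Submodule ℝ V, Module.finrank ℝ M = m ∧ ∃ φ : ℕ → ℕ, StrictMono φ ∧
      Tendsto (fun j => (L (φ j)).starProjection) atTop (𝓝 M.starProjection) := by
  have hcpt : IsCompact (closedBall 0 1 ∩ {p : V →L[ℝ] V | IsStarProjection p}) :=
    (isCompact_closedBall 0 1).inter_right isClosed_setOf_isStarProjection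
  obtain ⟨Q, ⟨-, hQ⟩, φ, hφ, hlim⟩ := hcpt.tendsto_subseq (x := fun k => (L k).starProjection)
    fun k => ⟨mem_closedBall_zero_iff.2 (L k).starProjection_norm_le,
      isStarProjection_starProjection⟩
  obtain ⟨M, _, rfl⟩ := isStarProjection_iff_eq_starProjection.1 hQ
  refine ⟨M, ?_, φ, hφ, hlim⟩
  have htrace : Continuous fun p : V →L[ℝ] V => LinearMap.trace ℝ V p :=
    ((LinearMap.trace ℝ V).comp (ContinuousLinearMap.coeLM ℝ)).continuous_of_finiteDimensional
  have hconst : (fun j => LinearMap.trace ℝ V (L (φ j)).starProjection) = fun _ => (m : ℝ) := by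
    simp only [Submodule.trace_starProjection, hL]
  have htrace_lim := (htrace.tendsto _).comp hlim
  rw [Function.comp_def, Function.comp_def, hconst, Submodule.trace_starProjection] at htrace_lim
  exact_mod_cast tendsto_nhds_unique htrace_lim tendsto_const_nhds

lemma Submodule.mem_orthogonal_of_tendsto_starProjection {K : ℕ → Submodule ℝ V}
    {M : Submodule ℝ V} (hK : Tendsto (fun k => (K k).starProjection) atTop (𝓝 M.starProjection))
    {x : ℕ → V} {y : V} (hx : Tendsto x atTop (𝓝 y)) (hmem : ∀ k, x k ∈ (K k)ᗮ) : y ∈ Mᗮ := by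
  have hlim : Tendsto (fun k => (K k).starProjection (x k)) atTop (𝓝 (M.starProjection y)) :=
    (isBoundedBilinearMap_apply.continuous.tendsto _).comp (hK.prodMk_nhds hx)
  simp only [(K _).starProjection_apply_eq_zero_iff.2 (hmem _)] at hlim
  exact (M.starProjection_apply_eq_zero_iff).1 (tendsto_nhds_unique hlim tendsto_const_nhds)

end Grassmannian

namespace SCD

variable {n : ℕ}

lemma mk2_fst2_snd2 (w : E2 n) : mk2 (fst2 w) (snd2 w) = w := rfl

lemma norm_fst2_le (w : E2 n) : ‖fst2 w‖ ≤ ‖w‖ := WithLp.norm_fst_le _ w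

lemma continuous_snd2 : Continuous (snd2 : E2 n → E n) := WithLp.continuous_snd ..

lemma continuous_Sneg_symm : Continuous (Sneg n).symm := by
  rw [show ⇑(Sneg n).symm = fun u => mk2 (snd2 u) (-fst2 u) from rfl]
  exact (WithLp.prod_continuous_toLp ..).comp
    (continuous_snd2.prodMk (WithLp.continuous_fst ..).neg)

lemma eq_zero_of_mem_Znreg {L : Submodule ℝ (E2 n)} (hL : L ∈ Znreg n) {w : E2 n} (hw : w ∈ L)
    (hsnd : snd2 w = 0) : w = 0 := by
  rw [← mk2_fst2_snd2 w, hsnd] at hw ⊢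
  rw [hL.2 _ hw]
  exact (lp2 n).symm.map_zero

lemma dZ_eq_dist (L M : Submodule ℝ (E2 n)) : dZ L M = dist L.starProjection M.starProjection :=
  (dist_eq_norm _ _).symm

lemma tendsto_dZ_iff {L : ℕ → Submodule ℝ (E2 n)} {M : Submodule ℝ (E2 n)} :
    Tendsto (fun k => dZ (L k) M) atTop (𝓝 0) ↔
      Tendsto (fun k => (L k).starProjection) atTop (𝓝 M.starProjection) := by
  simp only [dZ_eq_dist]
  exact tendsto_iff_dist_tendsto_zero.symm

/-- The pairs `(w, P)` with `w ∈ O_F` and `P` the orthogonal projection onto `T_{gph F}(w)`. -/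
def tangentProjections (F : E n → Set (E n)) : Set (E2 n × (E2 n →L[ℝ] E2 n)) :=
  {p | ∃ T : Submodule ℝ (E2 n), p.1 ∈ gph F ∧ Module.finrank ℝ T = n ∧
    (T : Set (E2 n)) = tcone (gph F) p.1 ∧ p.2 = T.starProjection}

lemma mem_Sp_iff {F : E n → Set (E n)} {z : E2 n} {M : Submodule ℝ (E2 n)} :
    M ∈ Sp F z ↔
      Module.finrank ℝ M = n ∧ (z, M.starProjection) ∈ closure (tangentProjections F) := by
  rw [mem_closure_iff_seq_limit]
  refine and_congr_right fun _ => ⟨?_, ?_⟩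
  · rintro ⟨zk, Lk, hk, hz, hL⟩
    exact ⟨fun k => (zk k, (Lk k).starProjection),
      fun k => ⟨Lk k, (hk k).1, (hk k).2.1, (hk k).2.2, rfl⟩, hz.prodMk_nhds (tendsto_dZ_iff.1 hL)⟩
  · rintro ⟨p, hp, hlim⟩
    choose T hgph hrank htan hproj using hp
    refine ⟨fun k => (p k).1, T, fun k => ⟨hgph k, hrank k, htan k⟩,
      (continuous_fst.tendsto _).comp hlim, tendsto_dZ_iff.2 ?_⟩
    have hsnd := (continuous_snd.tendsto _).comp hlim
    simpa only [Function.comp_def, hproj] using hsnd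

lemma mem_Sp_of_tendsto {F : E n → Set (E n)} {z : E2 n} {L : ℕ → Submodule ℝ (E2 n)}
    (hL : ∀ k, L k ∈ Sp F z) {M : Submodule ℝ (E2 n)} (hM : Module.finrank ℝ M = n)
    (hlim : Tendsto (fun k => (L k).starProjection) atTop (𝓝 M.starProjection)) :
    M ∈ Sp F z :=
  mem_Sp_iff.2 ⟨hM, isClosed_closure.mem_of_tendsto (tendsto_const_nhds.prodMk_nhds hlim)
    (Eventually.of_forall fun k => (mem_Sp_iff.1 (hL k)).2)⟩

lemma mem_adjS_iff {L : Submodule ℝ (E2 n)} {u : E2 n} : u ∈ adjS L ↔ (Sneg n).symm u ∈ Lᗮ :=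
  Submodule.mem_map_equiv _

lemma exists_mem_adjS_tendsto_subseq {F : E n → Set (E n)} {z : E2 n}
    {L : ℕ → Submodule ℝ (E2 n)} {u : ℕ → E2 n} (hL : ∀ k, L k ∈ Sp F z)
    (hu : ∀ k, u k ∈ adjS (L k)) (hnorm : ∀ k, ‖u k‖ = 1) :
    ∃ M ∈ Sp F z, ∃ v ∈ adjS M, ‖v‖ = 1 ∧
      ∃ φ : ℕ → ℕ, StrictMono φ ∧ Tendsto (u ∘ φ) atTop (𝓝 v) := by
  obtain ⟨M, hM, φ, hφ, hLφ⟩ := exists_subseq_tendsto_starProjection fun k => (hL k).1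
  obtain ⟨v, hv, ψ, hψ, huψ⟩ := (isCompact_sphere (0 : E2 n) 1).tendsto_subseq (x := u ∘ φ)
    fun k => mem_sphere_zero_iff_norm.2 (hnorm _)
  have hLφψ := hLφ.comp hψ.tendsto_atTop
  refine ⟨M, mem_Sp_of_tendsto (fun j => hL _) hM hLφψ, v, ?_, mem_sphere_zero_iff_norm.1 hv,
    φ ∘ ψ, hφ.comp hψ, huψ⟩
  exact mem_adjS_iff.2 (Submodule.mem_orthogonal_of_tendsto_starProjection hLφψ
    ((continuous_Sneg_symm.tendsto v).comp huψ) fun j => mem_adjS_iff.1 (hu _))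

lemma exists_unit_seq_of_not_bddAbove {F : E n → Set (E n)} {z : E2 n}
    (h : ¬ BddAbove (scdregSet F z)) :
    ∃ (L : ℕ → Submodule ℝ (E2 n)) (u : ℕ → E2 n),
      (∀ k, L k ∈ Sp F z ∧ u k ∈ adjS (L k) ∧ ‖u k‖ = 1) ∧
        Tendsto (fun k => snd2 (u k)) atTop (𝓝 0) := by
  rw [not_bddAbove_iff] at h
  choose r hr hlt using fun k : ℕ => h k
  choose L' hL' w hw hsnd hr_eq using hr
  choose L hL hL'_eq using hL'
  have hw_large : ∀ k : ℕ, (k : ℝ) < ‖w k‖ := fun k => (hr_eq k ▸ hlt k).trans_le (norm_fst2_le _)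
  have hw_ne : ∀ k, w k ≠ 0 := fun k => norm_pos_iff.1 ((Nat.cast_nonneg k).trans_lt (hw_large k))
  refine ⟨L, fun k => ‖w k‖⁻¹ • w k,
    fun k => ⟨hL k, Submodule.smul_mem _ _ (hL'_eq k ▸ hw k), norm_smul_inv_norm (hw_ne k)⟩, ?_⟩
  have hinv : Tendsto (fun k => ‖w k‖⁻¹) atTop (𝓝 0) :=
    tendsto_inv_atTop_zero.comp
      (tendsto_atTop_mono (fun k => (hw_large k).le) tendsto_natCast_atTop_atTop)
  refine squeeze_zero_norm (fun k => ?_) hinv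
  calc ‖snd2 (‖w k‖⁻¹ • w k)‖ = ‖w k‖⁻¹ * ‖snd2 (w k)‖ := by
        rw [show snd2 (‖w k‖⁻¹ • w k) = ‖w k‖⁻¹ • snd2 (w k) from rfl, norm_smul,
          Real.norm_of_nonneg (by positivity)]
    _ ≤ ‖w k‖⁻¹ := mul_le_of_le_one_right (by positivity) (hsnd k)

theorem stmt12_general (n : ℕ) (F : E n → Set (E n)) (z : E2 n)
    (hreg : SCDRegularAround F z) :
    BddAbove (scdregSet F z) := by
  by_contra hunb
  obtain ⟨L, u, hLu, hsnd⟩ := exists_unit_seq_of_not_bddAbove hunb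
  obtain ⟨M, hM, v, hv, hv_norm, φ, hφ, hlim⟩ := exists_mem_adjS_tendsto_subseq
    (fun k => (hLu k).1) (fun k => (hLu k).2.1) fun k => (hLu k).2.2
  have hsnd_v : snd2 v = 0 :=
    tendsto_nhds_unique ((continuous_snd2.tendsto v).comp hlim) (hsnd.comp hφ.tendsto_atTop)
  have hv_zero : v = 0 := eq_zero_of_mem_Znreg (hreg.2 _ ⟨M, hM, rfl⟩) hv hsnd_v
  simp [hv_zero] at hv_norm

theorem stmt12 (n : ℕ) (F : E n → Set (E n)) (z : E2 n) (hz : z ∈ gph F)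
    (hreg : SCDRegularAround F z) :
    BddAbove (scdregSet F z) :=
  stmt12_general n F z hreg

end SCD
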